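/- For the Lorentz boost vector field ξ = K_1 = t∂_1 − c⁻²x_1∂_t on {x ∈ ℝ⁴ : x·x ≠ 0}, the Lie derivative of the tensor g_{μν} = −(l²/(x·x)²)(η_{μρ}η_{ντ} − η_{μν}η_{ρτ})x^ρx^τ vanishes: ℒ_ξ g_{μν} = g_{μν,λ}ξ^λ + g_{μλ}∂_νξ^λ + g_{λν}∂_μξ^λ = 0. -/

import Mathlib

open scoped BigOperators

/-- Sign of the Minkowski metric η = diag(1,-1,-1,-1). -/
def etaS (μ : Fin 4) : ℝ := if μ = 0 then 1 else -1

/-- Minkowski metric components η_{μν}. -/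
def etaM (μ ν : Fin 4) : ℝ := if μ = ν then etaS μ else 0

/-- Minkowski inner product x·y = η_{μν}x^μy^ν. -/
def mdot (x y : Fin 4 → ℝ) : ℝ := ∑ μ, etaS μ * x μ * y μ

/-- Lowered components x_μ = η_{μν}x^ν. -/
def lowerIdx (x : Fin 4 → ℝ) (μ : Fin 4) : ℝ := etaS μ * x μ

/-- Connection coefficients Γ^μ_{νλ}(x) = −(x_ν δ^μ_λ + δ^μ_ν x_λ)/(x·x). -/
noncomputable def Gam (x : Fin 4 → ℝ) (μ ν lam : Fin 4) : ℝ :=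
  -((lowerIdx x ν) * (if μ = lam then (1:ℝ) else 0)
    + (if μ = ν then (1:ℝ) else 0) * lowerIdx x lam) / mdot x x

/-- The degenerate metric, sign `s`: g_{μν} = s·(l²/(x·x)²)(η_{μρ}η_{ντ} − η_{μν}η_{ρτ})x^ρx^τ. -/
noncomputable def gten (l s : ℝ) (x : Fin 4 → ℝ) (μ ν : Fin 4) : ℝ :=
  s * (l ^ 2 / (mdot x x) ^ 2) *
    ∑ ρ, ∑ τ, (etaM μ ρ * etaM ν τ - etaM μ ν * etaM ρ τ) * x ρ * x τ

/-- The degenerate (2,0)-tensor h^{μν} = l⁻⁴(x·x)x^μx^ν. -/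
noncomputable def hten (l : ℝ) (x : Fin 4 → ℝ) (μ ν : Fin 4) : ℝ :=
  (1 / l ^ 4) * mdot x x * x μ * x ν

/-- Partial derivative ∂_μ f at x. -/
noncomputable def pd (f : (Fin 4 → ℝ) → ℝ) (μ : Fin 4) (x : Fin 4 → ℝ) : ℝ :=
  fderiv ℝ f x (Pi.single μ 1)

/-- The Lorentz-boost vector field K₁ = t∂₁ − c⁻²x₁∂_t, in coordinates (x⁰ = ct, xⁱ)
(so t = x⁰/c, ∂_t = c∂₀, x₁ = −x¹). -/
noncomputable def K1 (c : ℝ) : (Fin 4 → ℝ) → Fin 4 → ℝ := fun p =>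
  (p 0 / c) • (Pi.single 1 1 : Fin 4 → ℝ)
    + (-(1 / c ^ 2) * (-(p 1)) * c) • (Pi.single 0 1 : Fin 4 → ℝ)

/-!
The tensor is `g_{μν} = s l² (x_μ x_ν - η_{μν} x·x) / (x·x)²`, built from `η` and `x` alone, so its
Lie derivative vanishes along every linear field `ξ x = A x` with `η A` skew-symmetric (the
Lorentz algebra), and `K₁` is such a field. The Lie derivative obeys the Leibniz rule for a scalar
factor, and `ξ` kills every function of `x·x` because `x·(A x) = 0`. For the numerator, the terms
`g_{μλ} ∂_ν ξ^λ + g_{λν} ∂_μ ξ^λ` cancel the derivative of `x_μ x_ν` along `A x` and, by skewness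
of `η A`, contribute nothing through `η_{μν} x·x`.
-/

open scoped Matrix

noncomputable def lieDeriv (ξ : (Fin 4 → ℝ) → Fin 4 → ℝ) (T : (Fin 4 → ℝ) → Fin 4 → Fin 4 → ℝ)
    (x : Fin 4 → ℝ) (μ ν : Fin 4) : ℝ :=
  (∑ lam, pd (fun p => T p μ ν) lam x * ξ x lam)
    + (∑ lam, T x μ lam * pd (fun p => ξ p lam) ν x)
    + (∑ lam, T x lam ν * pd (fun p => ξ p lam) μ x)

theorem sum_pd_mul_eq_fderiv (f : (Fin 4 → ℝ) → ℝ) (x v : Fin 4 → ℝ) :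
    ∑ lam, pd f lam x * v lam = fderiv ℝ f x v := by
  conv_rhs => rw [← Finset.univ_sum_single v]
  simp only [map_sum, pd]
  refine Finset.sum_congr rfl fun i _ => ?_
  rw [mul_comm, ← smul_eq_mul, ← map_smul, ← Pi.single_smul, smul_eq_mul, mul_one]

theorem pd_mulVec (A : Matrix (Fin 4) (Fin 4) ℝ) (x : Fin 4 → ℝ) (i j : Fin 4) :
    pd (fun p => (A *ᵥ p) i) j x = A i j := by
  let L : (Fin 4 → ℝ) →L[ℝ] ℝ :=
    (ContinuousLinearMap.proj i).comp (LinearMap.toContinuousLinearMap (Matrix.toLin' A))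
  change fderiv ℝ L x (Pi.single j 1) = A i j
  rw [L.fderiv]
  simp [L]

theorem lieDeriv_mul (ξ : (Fin 4 → ℝ) → Fin 4 → ℝ) (f : (Fin 4 → ℝ) → ℝ)
    (T : (Fin 4 → ℝ) → Fin 4 → Fin 4 → ℝ) (x : Fin 4 → ℝ) (μ ν : Fin 4)
    (hf : DifferentiableAt ℝ f x) (hT : DifferentiableAt ℝ (fun p => T p μ ν) x) :
    lieDeriv ξ (fun p μ ν => f p * T p μ ν) x μ ν
      = fderiv ℝ f x (ξ x) * T x μ ν + f x * lieDeriv ξ T x μ ν := by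
  have hpd : ∀ lam, pd (fun p => f p * T p μ ν) lam x
      = f x * pd (fun p => T p μ ν) lam x + T x μ ν * pd f lam x := by
    intro lam
    rw [pd, show (fun p => f p * T p μ ν) = f * fun p => T p μ ν from rfl, fderiv_mul hf hT]
    simp [pd]
  simp only [lieDeriv, hpd, add_mul, Finset.sum_add_distrib, mul_assoc, ← Finset.mul_sum,
    sum_pd_mul_eq_fderiv]
  ring

theorem sum_etaM_mul (μ : Fin 4) (f : Fin 4 → ℝ) : ∑ ρ, etaM μ ρ * f ρ = etaS μ * f μ := by
  simp [etaM, ite_mul]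

theorem hasFDerivAt_lowerIdx (x : Fin 4 → ℝ) (μ : Fin 4) :
    HasFDerivAt (fun p => lowerIdx p μ) (etaS μ • ContinuousLinearMap.proj (R := ℝ) μ) x :=
  (hasFDerivAt_apply μ x).const_mul (etaS μ)

theorem differentiableAt_mdot_self (x : Fin 4 → ℝ) :
    DifferentiableAt ℝ (fun p => mdot p p) x := by
  unfold mdot
  fun_prop

theorem fderiv_mdot_self_apply (x v : Fin 4 → ℝ) :
    fderiv ℝ (fun p => mdot p p) x v = 2 * mdot x v := by
  have h : HasFDerivAt (fun p => mdot p p) _ x :=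
    HasFDerivAt.fun_sum fun μ _ => (hasFDerivAt_lowerIdx x μ).mul (hasFDerivAt_apply μ x)
  rw [h.fderiv]
  simp [mdot, lowerIdx, Finset.mul_sum]
  ring_nf

def gNum (p : Fin 4 → ℝ) (μ ν : Fin 4) : ℝ :=
  lowerIdx p μ * lowerIdx p ν - etaM μ ν * mdot p p

theorem gNum_comm (p : Fin 4 → ℝ) (μ ν : Fin 4) : gNum p μ ν = gNum p ν μ := by
  simp only [gNum, etaM, eq_comm (a := μ)]
  split_ifs with h <;> simp [h, mul_comm]

theorem gten_eq_mul_gNum (l s : ℝ) (p : Fin 4 → ℝ) (μ ν : Fin 4) :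
    gten l s p μ ν = s * (l ^ 2 / mdot p p ^ 2) * gNum p μ ν := by
  simp only [gten, gNum, sub_mul, Finset.sum_sub_distrib, mul_assoc, ← Finset.mul_sum]
  simp [etaM, ite_mul, lowerIdx, mdot, mul_assoc, mul_left_comm]

theorem fderiv_gNum_apply (x v : Fin 4 → ℝ) (μ ν : Fin 4) :
    fderiv ℝ (fun p => gNum p μ ν) x v
      = lowerIdx v μ * lowerIdx x ν + lowerIdx x μ * lowerIdx v ν
          - etaM μ ν * (2 * mdot x v) := by
  have h : HasFDerivAt (fun p => gNum p μ ν) _ x :=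
    ((hasFDerivAt_lowerIdx x μ).mul (hasFDerivAt_lowerIdx x ν)).sub
      ((differentiableAt_mdot_self x).hasFDerivAt.const_mul (etaM μ ν))
  rw [h.fderiv]
  simp [fderiv_mdot_self_apply, lowerIdx]
  ring

section LorentzAlgebra

variable {A : Matrix (Fin 4) (Fin 4) ℝ} (hA : (Matrix.diagonal etaS).IsSkewAdjoint A)
include hA

theorem etaS_mul_apply_of_isSkewAdjoint (μ ν : Fin 4) :
    etaS μ * A μ ν = -(etaS ν * A ν μ) := by
  have h := congrFun (congrFun hA ν) μ
  rw [Matrix.mul_neg, Matrix.neg_apply, Matrix.mul_diagonal, Matrix.diagonal_mul,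
    Matrix.transpose_apply] at h
  linarith

theorem sum_lowerIdx_mul_of_isSkewAdjoint (x : Fin 4 → ℝ) (ν : Fin 4) :
    ∑ lam, lowerIdx x lam * A lam ν = -lowerIdx (A *ᵥ x) ν := by
  simp only [lowerIdx, Matrix.mulVec, dotProduct, Finset.mul_sum, ← Finset.sum_neg_distrib]
  refine Finset.sum_congr rfl fun lam _ => ?_
  linear_combination x lam * etaS_mul_apply_of_isSkewAdjoint hA lam ν

theorem mdot_mulVec_self_of_isSkewAdjoint (x : Fin 4 → ℝ) : mdot x (A *ᵥ x) = 0 := by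
  have h : mdot x (A *ᵥ x) = -mdot x (A *ᵥ x) := calc
    mdot x (A *ᵥ x) = ∑ ν, lowerIdx (A *ᵥ x) ν * x ν :=
      Finset.sum_congr rfl fun ν _ => by rw [lowerIdx]; ring
    _ = -∑ ν, (∑ lam, lowerIdx x lam * A lam ν) * x ν := by
      simp only [sum_lowerIdx_mul_of_isSkewAdjoint hA, neg_mul, Finset.sum_neg_distrib, neg_neg]
    _ = -mdot x (A *ᵥ x) := by
      simp only [Finset.sum_mul]
      rw [Finset.sum_comm]
      simp only [mdot, lowerIdx, Matrix.mulVec, dotProduct, Finset.mul_sum, mul_assoc]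
  linarith

theorem sum_gNum_mul_of_isSkewAdjoint (x : Fin 4 → ℝ) (μ ν : Fin 4) :
    ∑ lam, gNum x μ lam * A lam ν
      = -(lowerIdx x μ * lowerIdx (A *ᵥ x) ν) - mdot x x * (etaS μ * A μ ν) :=
  calc ∑ lam, gNum x μ lam * A lam ν
      = lowerIdx x μ * ∑ lam, lowerIdx x lam * A lam ν
          - mdot x x * ∑ lam, etaM μ lam * A lam ν := by
        simp only [gNum, sub_mul, Finset.sum_sub_distrib, Finset.mul_sum]
        congr 1 <;> exact Finset.sum_congr rfl fun _ _ => by ring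
    _ = _ := by rw [sum_lowerIdx_mul_of_isSkewAdjoint hA, sum_etaM_mul]; ring

theorem lieDeriv_gNum_of_isSkewAdjoint (x : Fin 4 → ℝ) (μ ν : Fin 4) :
    lieDeriv (fun p => A *ᵥ p) gNum x μ ν = 0 := by
  simp only [lieDeriv, sum_pd_mul_eq_fderiv, fderiv_gNum_apply, pd_mulVec,
    mdot_mulVec_self_of_isSkewAdjoint hA, gNum_comm x _ ν, sum_gNum_mul_of_isSkewAdjoint hA,
    etaS_mul_apply_of_isSkewAdjoint hA ν μ]
  ring

theorem lieDeriv_gten_of_isSkewAdjoint (l s : ℝ) {x : Fin 4 → ℝ} (hx : mdot x x ≠ 0)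
    (μ ν : Fin 4) : lieDeriv (fun p => A *ᵥ p) (gten l s) x μ ν = 0 := by
  set φ : ℝ → ℝ := fun q => s * (l ^ 2 / q ^ 2)
  have hgten : gten l s = fun p μ ν => (φ ∘ fun q => mdot q q) p * gNum p μ ν := by
    funext p μ ν
    exact gten_eq_mul_gNum l s p μ ν
  have hφ : DifferentiableAt ℝ φ (mdot x x) := by fun_prop (disch := simp [hx])
  have hQ := differentiableAt_mdot_self x
  have hgNum : DifferentiableAt ℝ (fun p => gNum p μ ν) x := by
    unfold gNum lowerIdx mdot
    fun_prop
  have hfactor : fderiv ℝ (φ ∘ fun q => mdot q q) x (A *ᵥ x) = 0 := by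
    rw [fderiv_comp (f := fun q => mdot q q) x hφ hQ, ContinuousLinearMap.comp_apply,
      fderiv_mdot_self_apply, mdot_mulVec_self_of_isSkewAdjoint hA, mul_zero, map_zero]
  rw [hgten, lieDeriv_mul _ _ _ _ _ _ (hφ.comp (f := fun q => mdot q q) x hQ) hgNum, hfactor,
    lieDeriv_gNum_of_isSkewAdjoint hA, zero_mul, mul_zero, add_zero]

end LorentzAlgebra

noncomputable def boostGen (c : ℝ) : Matrix (Fin 4) (Fin 4) ℝ :=
  c⁻¹ • (Matrix.single 0 1 1 + Matrix.single 1 0 1)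

theorem K1_eq_mulVec_boostGen (c : ℝ) : K1 c = fun p => boostGen c *ᵥ p := by
  funext p i
  fin_cases i <;> simp [K1, boostGen, Matrix.mulVec, dotProduct, Matrix.single_apply]
  · rcases eq_or_ne c 0 with rfl | hc
    · simp
    · field_simp
  · exact div_eq_inv_mul _ _

theorem isSkewAdjoint_boostGen (c : ℝ) : (Matrix.diagonal etaS).IsSkewAdjoint (boostGen c) := by
  ext i j
  fin_cases i <;> fin_cases j <;> simp [boostGen, etaS]

theorem lie_derivative_g_boost_general (c l : ℝ) :
    ∀ x : Fin 4 → ℝ, mdot x x ≠ 0 → ∀ μ ν : Fin 4,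
      (∑ lam, pd (fun p => gten l (-1) p μ ν) lam x * K1 c x lam)
        + (∑ lam, gten l (-1) x μ lam * pd (fun p => K1 c p lam) ν x)
        + (∑ lam, gten l (-1) x lam ν * pd (fun p => K1 c p lam) μ x) = 0 := by
  intro x hx μ ν
  rw [K1_eq_mulVec_boostGen]
  exact lieDeriv_gten_of_isSkewAdjoint (isSkewAdjoint_boostGen c) l (-1) hx μ ν

/-- The Lie derivative of g⁻ along the boost K₁ vanishes:
ℒ_ξ g_{μν} = g_{μν,λ}ξ^λ + g_{μλ}∂_νξ^λ + g_{λν}∂_μξ^λ = 0 on {x·x ≠ 0}. -/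
theorem lie_derivative_g_boost (c l : ℝ) (hc : 0 < c) (hl : 0 < l) :
    ∀ x : Fin 4 → ℝ, mdot x x ≠ 0 → ∀ μ ν : Fin 4,
      (∑ lam, pd (fun p => gten l (-1) p μ ν) lam x * K1 c x lam)
        + (∑ lam, gten l (-1) x μ lam * pd (fun p => K1 c p lam) ν x)
        + (∑ lam, gten l (-1) x lam ν * pd (fun p => K1 c p lam) μ x) = 0 :=
  lie_derivative_g_boost_general c l
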